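/- arXiv:1111.3759 — 5 statements merged into one kernel-verified Lean document; each statement's English description precedes it below -/
import Mathlib

section
/- (Furuta inequality, special case) If A ≥ B ≥ 0 are positive operators on a Hilbert space, then for every r ≥ 0 and p ≥ 1, taking q = (p+r)/(1+r) (so that (1+r)q = p+r), one has (A^{r/2} B^p A^{r/2})^{(1+r)/(p+r)} ≤ A^{1+r}. -/
open scoped NNReal ENNReal
open Topology
noncomputable section
set_option linter.unusedSectionVars false
set_option maxHeartbeats 1000000
set_option linter.unnecessarySimpa false
namespace Furuta

/-- exponent-continuity scalar bound -/
lemma scalar_exp_bound {x M α v w : ℝ} (hx0 : 0 ≤ x) (hxM : x ≤ M)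
    (h0α : 0 < α) (hαv : α ≤ v) (hvw : v ≤ w) (hw1 : w ≤ 1) :
    |x ^ w - x ^ v| ≤ (w - v) * (1/α + (M+2)^3) := by
  have hv0 : 0 < v := h0α.trans_le hαv
  have hwv : 0 ≤ w - v := sub_nonneg.mpr hvw
  have hM2 : (2:ℝ) ≤ M + 2 := by linarith
  have hcube : (0:ℝ) ≤ (M+2)^3 := by positivity
  have hC : 0 ≤ 1/α + (M+2)^3 := by positivity
  rcases eq_or_lt_of_le hx0 with rfl | hx
  · rw [Real.zero_rpow (ne_of_gt (by linarith : (0:ℝ) < w)),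
      Real.zero_rpow (ne_of_gt hv0)]
    simpa using mul_nonneg hwv hC
  have hxe : x ^ (w-v) = Real.exp (Real.log x * (w-v)) := Real.rpow_def_of_pos hx _
  have hsplit : x ^ w = x ^ v * x ^ (w - v) := by
    rw [← Real.rpow_add hx]; ring_nf
  rcases le_or_gt x 1 with hx1 | hx1
  · -- 0 < x ≤ 1
    have hmono : x ^ w ≤ x ^ v := Real.rpow_le_rpow_of_exponent_ge hx hx1 hvw
    rw [abs_of_nonpos (by linarith), neg_sub]
    have hlog : 1 - x ^ (w-v) ≤ (w - v) * (-Real.log x) := by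
      have h1 := Real.add_one_le_exp (Real.log x * (w-v))
      rw [hxe]; nlinarith
    have hxv : x ^ v ≤ x ^ α := Real.rpow_le_rpow_of_exponent_ge hx hx1 hαv
    have hkey : x ^ α * (-Real.log x) ≤ 1/α := by
      have ht0 : 0 < x ^ α := Real.rpow_pos_of_pos hx α
      have ht1 : Real.log (x ^ α) = α * Real.log x := Real.log_rpow hx α
      have h2 : Real.log (x ^ α)⁻¹ ≤ (x ^ α)⁻¹ - 1 :=
        Real.log_le_sub_one_of_pos (by positivity)
      rw [Real.log_inv, ht1] at h2
      -- h2 : -(α * log x) ≤ (x^α)⁻¹ - 1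
      have h3 : x ^ α * (α * (-Real.log x)) ≤ 1 - x ^ α := by
        have := mul_le_mul_of_nonneg_left h2 ht0.le
        have hinv : x ^ α * (x ^ α)⁻¹ = 1 := mul_inv_cancel₀ (ne_of_gt ht0)
        nlinarith
      have hx1' : x ^ α ≤ 1 := Real.rpow_le_one hx0 hx1 (by linarith)
      rw [le_div_iff₀ h0α]
      nlinarith
    have hlogx : 0 ≤ -Real.log x := by simpa using Real.log_nonpos hx.le hx1
    have hxvpos : 0 ≤ x ^ v := (Real.rpow_pos_of_pos hx v).le
    calc x ^ v - x ^ w = x ^ v * (1 - x ^ (w - v)) := by rw [hsplit]; ring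
      _ ≤ x ^ α * ((w - v) * (-Real.log x)) := by
          apply mul_le_mul hxv hlog ?_ (Real.rpow_pos_of_pos hx α).le
          nlinarith [Real.rpow_le_one hx0 hx1 hwv]
      _ = (w - v) * (x ^ α * (-Real.log x)) := by ring
      _ ≤ (w - v) * (1/α) := mul_le_mul_of_nonneg_left hkey hwv
      _ ≤ (w - v) * (1/α + (M+2)^3) := by nlinarith
  · -- 1 < x
    have hmono : x ^ v ≤ x ^ w := Real.rpow_le_rpow_of_exponent_le hx1.le hvw
    rw [abs_of_nonneg (by linarith)]
    have hlx : 0 ≤ Real.log x := Real.log_nonneg hx1.le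
    have hexp : x ^ (w - v) - 1 ≤ (w - v) * Real.log x * x ^ (w - v) := by
      have h1 := Real.add_one_le_exp (-(Real.log x * (w-v)))
      have h2 : Real.exp (-(Real.log x * (w-v))) * Real.exp (Real.log x * (w-v)) = 1 := by
        rw [← Real.exp_add]; simp
      have hp := (Real.exp_pos (Real.log x * (w-v))).le
      rw [hxe]
      nlinarith [mul_le_mul_of_nonneg_right h1 hp]
    have hone : (1:ℝ) ≤ x ^ (w - v) := Real.one_le_rpow hx1.le hwv
    have hxv1 : x ^ v ≤ x := by
      nth_rewrite 2 [← Real.rpow_one x]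
      exact Real.rpow_le_rpow_of_exponent_le hx1.le (hvw.trans hw1)
    have hxwv : x ^ (w - v) ≤ x := by
      nth_rewrite 2 [← Real.rpow_one x]
      exact Real.rpow_le_rpow_of_exponent_le hx1.le (by linarith)
    have hlxM : Real.log x ≤ M + 2 := by
      have := Real.log_le_sub_one_of_pos (by linarith : (0:ℝ) < x)
      linarith
    have hxM2 : x ≤ M + 2 := by linarith
    calc x ^ w - x ^ v = x ^ v * (x ^ (w - v) - 1) := by rw [hsplit]; ring
      _ ≤ x * ((w - v) * Real.log x * x) := by
          apply mul_le_mul hxv1 (hexp.trans ?_) (by linarith) (by linarith)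
          exact mul_le_mul_of_nonneg_left hxwv (by positivity)
      _ = (w - v) * (Real.log x * x * x) := by ring
      _ ≤ (w - v) * (M+2)^3 := by
          apply mul_le_mul_of_nonneg_left ?_ hwv
          calc Real.log x * x * x ≤ (M+2)*(M+2)*(M+2) := by
                apply mul_le_mul (mul_le_mul hlxM hxM2 (by linarith) (by linarith)) hxM2
                  (by linarith) (by positivity)
            _ = (M+2)^3 := by ring
      _ ≤ (w - v) * (1/α + (M+2)^3) := by
          have : 0 < 1/α := by positivity
          nlinarith

/-- base-perturbation scalar bound, `t ≥ 1` (Bernoulli) -/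
lemma scalar_base_bound {x ε t M : ℝ} (hx : 0 ≤ x) (hxM : x ≤ M) (hε : 0 ≤ ε)
    (ht : 1 ≤ t) (hε1 : ε ≤ 1) :
    (x + ε) ^ t ≤ x ^ t + t * (M+1) ^ (t-1) * ε := by
  have hMcoef : (0:ℝ) ≤ (M+1)^(t-1) := Real.rpow_nonneg (by linarith) _
  rcases eq_or_lt_of_le (by linarith : (0:ℝ) ≤ x + ε) with h0 | hpos
  · rw [← h0, Real.zero_rpow (by linarith : t ≠ 0)]
    have h1 : 0 ≤ x ^ t := Real.rpow_nonneg hx t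
    have h2 : 0 ≤ t * (M+1)^(t-1) * ε := by positivity
    linarith
  · set a := x + ε with ha
    have hb : 1 + t * (x / a - 1) ≤ (1 + (x / a - 1)) ^ t :=
      one_add_mul_self_le_rpow_one_add (by nlinarith [div_nonneg hx hpos.le]) ht
    rw [show 1 + (x/a - 1) = x / a by ring, Real.div_rpow hx hpos.le] at hb
    have hat : 0 < a ^ t := Real.rpow_pos_of_pos hpos t
    have h2 : a ^ t * (1 + t * (x/a - 1)) ≤ x ^ t := by
      calc a ^ t * (1 + t * (x/a - 1)) ≤ a ^ t * (x ^ t / a ^ t) :=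
            mul_le_mul_of_nonneg_left hb hat.le
        _ = x ^ t := by field_simp
    have hta : a ^ (t-1) * a = a ^ t := by
      rw [Real.rpow_sub hpos, Real.rpow_one]; field_simp
    have hmul : a ^ t * (x/a - 1) = - (a ^ (t-1) * ε) := by
      have hxa : a ^ t * (x/a) = a ^ (t-1) * x := by
        rw [← hta]; field_simp
      calc a ^ t * (x/a - 1) = a ^ t * (x/a) - a ^ t := by ring
        _ = a ^ (t-1) * x - a ^ (t-1) * a := by rw [hxa, hta]
        _ = - (a ^ (t-1) * ε) := by rw [ha]; ring
    have h5 : a ^ t - t * (a ^ (t-1) * ε) ≤ x ^ t := by nlinarith [h2, hmul]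
    have haM : a ^ (t-1) ≤ (M+1) ^ (t-1) :=
      Real.rpow_le_rpow (by positivity) (by rw [ha]; linarith) (by linarith)
    have h6 : t * (a ^ (t-1) * ε) ≤ t * ((M+1)^(t-1) * ε) :=
      mul_le_mul_of_nonneg_left (mul_le_mul_of_nonneg_right haM hε) (by linarith)
    calc (x+ε)^t = a ^ t := rfl
      _ ≤ x ^ t + t * ((M+1)^(t-1) * ε) := by linarith
      _ = x ^ t + t * (M+1)^(t-1) * ε := by ring

variable {A : Type*} [CStarAlgebra A] [PartialOrder A] [StarOrderedRing A] [Nontrivial A]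

lemma star_rpow (a : A) (y : ℝ) : star (a ^ y) = a ^ y :=
  (IsSelfAdjoint.of_nonneg CFC.rpow_nonneg).star_eq

lemma spec_le_nnnorm {a : A} {x : ℝ≥0} (hx : x ∈ spectrum ℝ≥0 a) : x ≤ ‖a‖₊ :=
  CStarAlgebra.le_nnnorm_of_mem_quasispectrum (spectrum_subset_quasispectrum ℝ≥0 a hx)

lemma algebraMap_eq' (r : ℝ≥0) :
    algebraMap ℝ≥0 A r = algebraMap ℝ A (r : ℝ) := by
  rw [IsScalarTower.algebraMap_apply ℝ≥0 ℝ A]; norm_num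

lemma algebraMap_nonneg' (ε : ℝ≥0) : (0:A) ≤ algebraMap ℝ≥0 A ε := by
  have h1 : (0:A) ≤ 1 := by simpa using star_mul_self_nonneg (1:A)
  have h := cfc_predicate (R := ℝ≥0) (fun _ : ℝ≥0 => ε) (1 : A)
  rwa [cfc_const ε (1:A) h1] at h

lemma norm_algebraMap_nnreal (r : ℝ≥0) : ‖algebraMap ℝ≥0 A r‖ = (r:ℝ) := by
  rw [algebraMap_eq', norm_algebraMap' A ((r:ℝ)), Real.norm_eq_abs, abs_of_nonneg r.coe_nonneg]

lemma rpow_add_of_nonneg {a : A} (ha : 0 ≤ a) {x y : ℝ} (hx : 0 ≤ x) (hy : 0 ≤ y) :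
    a ^ (x + y) = a ^ x * a ^ y := by
  rcases eq_or_lt_of_le hx with rfl | hx'
  · rw [zero_add, CFC.rpow_zero a ha, one_mul]
  rcases eq_or_lt_of_le hy with rfl | hy'
  · rw [add_zero, CFC.rpow_zero a ha, mul_one]
  lift x to ℝ≥0 using hx
  lift y to ℝ≥0 using hy
  have hx0 : 0 < x := by exact_mod_cast hx'
  have hy0 : 0 < y := by exact_mod_cast hy'
  rw [← NNReal.coe_add, ← CFC.nnrpow_eq_rpow (add_pos hx0 hy0),
    ← CFC.nnrpow_eq_rpow hx0, ← CFC.nnrpow_eq_rpow hy0, CFC.nnrpow_add hx0 hy0]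

lemma isUnit_rpow {a : A} (hu : IsUnit a) (ha : 0 ≤ a) (y : ℝ) : IsUnit (a ^ y) :=
  ⟨⟨a ^ y, a ^ (-y), CFC.rpow_mul_rpow_neg y (hu.isStrictlyPositive ha),
    CFC.rpow_neg_mul_rpow y (hu.isStrictlyPositive ha)⟩, rfl⟩

lemma add_algebraMap_eq_cfc {a : A} (ha : 0 ≤ a) (ε : ℝ≥0) :
    a + algebraMap ℝ≥0 A ε = cfc (fun x : ℝ≥0 => x + ε) a := by
  rw [cfc_add a (fun x : ℝ≥0 => x) (fun _ => ε), cfc_id' ℝ≥0 a ha, cfc_const ε a ha]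

lemma add_algebraMap_nonneg {a : A} (ha : 0 ≤ a) (ε : ℝ≥0) :
    (0:A) ≤ a + algebraMap ℝ≥0 A ε :=
  add_nonneg ha (algebraMap_nonneg' ε)

lemma add_algebraMap_rpow {a : A} (ha : 0 ≤ a) (ε : ℝ≥0) {t : ℝ} (ht : 0 ≤ t) :
    (a + algebraMap ℝ≥0 A ε) ^ t = cfc (fun x : ℝ≥0 => (x + ε) ^ t) a := by
  rw [CFC.rpow_def, add_algebraMap_eq_cfc ha ε,
    ← cfc_comp' (fun x : ℝ≥0 => x ^ t) (fun x : ℝ≥0 => x + ε) a ?_ (by fun_prop) ha]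
  exact NNReal.continuousOn_rpow_const (Or.inr ht)

lemma sandwich {z : A} {c : ℝ≥0} (h1 : z ≤ algebraMap ℝ≥0 A c)
    (h2 : -(algebraMap ℝ≥0 A c) ≤ z) : ‖z‖ ≤ 3 * (c:ℝ) := by
  set w := algebraMap ℝ≥0 A c with hw
  have hz2 : 0 ≤ z + w := by
    have h := add_le_add_left h2 w
    simpa using h
  have hz3 : z + w ≤ algebraMap ℝ≥0 A (2*c) := by
    have h := add_le_add_left h1 w
    calc z + w ≤ w + w := h
      _ = algebraMap ℝ≥0 A (2*c) := by rw [hw, two_mul, map_add]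
  have hn1 : ‖z + w‖ ≤ ((2*c : ℝ≥0) : ℝ) := by
    refine (CStarAlgebra.norm_le_iff_le_algebraMap (z + w) (by positivity) hz2).mpr ?_
    rwa [← algebraMap_eq']
  have hn2 : ‖z‖ ≤ ‖z + w‖ + ‖w‖ := by
    have h := norm_sub_le (z + w) w
    simpa using h
  have hwn : ‖w‖ = (c:ℝ) := norm_algebraMap_nnreal c
  push_cast at hn1
  rw [hwn] at hn2
  linarith

lemma cfc_dist_le {a : A} (ha : 0 ≤ a) {f g : ℝ≥0 → ℝ≥0} {c : ℝ≥0}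
    (h1 : ∀ x ∈ spectrum ℝ≥0 a, f x ≤ g x + c) (h2 : ∀ x ∈ spectrum ℝ≥0 a, g x ≤ f x + c)
    (hf : ContinuousOn f (spectrum ℝ≥0 a)) (hg : ContinuousOn g (spectrum ℝ≥0 a)) :
    ‖cfc f a - cfc g a‖ ≤ 3 * (c:ℝ) := by
  have hfg : cfc f a ≤ cfc g a + algebraMap ℝ≥0 A c := by
    rw [← cfc_const c a ha, ← cfc_add a g _ hg (by fun_prop)]
    exact cfc_mono h1 hf (by fun_prop)
  have hgf : cfc g a ≤ cfc f a + algebraMap ℝ≥0 A c := by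
    rw [← cfc_const c a ha, ← cfc_add a f _ hf (by fun_prop)]
    exact cfc_mono h2 hg (by fun_prop)
  refine sandwich ?_ ?_
  · rwa [sub_le_iff_le_add, add_comm]
  · rwa [neg_le_sub_iff_le_add]
lemma perturb_rpow_le {a : A} (ha : 0 ≤ a) (ε : ℝ≥0) {t : ℝ} (ht0 : 0 ≤ t) (ht1 : t ≤ 1) :
    (a + algebraMap ℝ≥0 A ε) ^ t ≤ a ^ t + algebraMap ℝ≥0 A (ε ^ t) := by
  have hc1 : ContinuousOn (fun x : ℝ≥0 => (x + ε) ^ (t:ℝ)) (spectrum ℝ≥0 a) :=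
    ((NNReal.continuous_rpow_const ht0).comp' (continuous_id.add continuous_const)).continuousOn
  have hc2 : ContinuousOn (fun x : ℝ≥0 => x ^ (t:ℝ) + ε ^ (t:ℝ)) (spectrum ℝ≥0 a) :=
    ((NNReal.continuous_rpow_const ht0).add continuous_const).continuousOn
  rw [add_algebraMap_rpow ha ε ht0, CFC.rpow_def, ← cfc_const (ε ^ (t:ℝ)) a ha,
    ← cfc_add a _ _ ((NNReal.continuous_rpow_const ht0).continuousOn) (by fun_prop)]
  exact cfc_mono (fun x _ => NNReal.rpow_add_le_add_rpow x ε ht0 ht1) hc1 hc2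

lemma perturb_rpow_dist {a : A} (ha : 0 ≤ a) {ε : ℝ≥0} (hε1 : ε ≤ 1) {t : ℝ} (ht : 0 ≤ t) :
    ‖(a + algebraMap ℝ≥0 A ε) ^ t - a ^ t‖
      ≤ 3 * ((ε:ℝ) ^ t + (t * ((‖a‖+1) ^ (t-1))) * ε) := by
  set cr : ℝ := (ε:ℝ) ^ t + (t * ((‖a‖+1) ^ (t-1))) * ε with hcr
  have hco : (0:ℝ) ≤ (‖a‖+1)^(t-1) := Real.rpow_nonneg (by positivity) _
  have h1' : (0:ℝ) ≤ (ε:ℝ)^t := Real.rpow_nonneg ε.coe_nonneg t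
  have hcr0 : 0 ≤ cr := by positivity
  set c : ℝ≥0 := cr.toNNReal with hc
  have hcc : (c : ℝ) = cr := Real.coe_toNNReal cr hcr0
  have key : ∀ x ∈ spectrum ℝ≥0 a, (x + ε) ^ (t:ℝ) ≤ x ^ (t:ℝ) + c := by
    intro x hx
    have hxM : (x:ℝ) ≤ ‖a‖ := by
      have h := spec_le_nnnorm hx; exact_mod_cast h
    rcases le_total t 1 with ht1 | ht1
    · refine (NNReal.rpow_add_le_add_rpow x ε ht ht1).trans ?_
      have hεc : (ε:ℝ≥0) ^ (t:ℝ) ≤ c := by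
        rw [← NNReal.coe_le_coe, hcc, hcr, NNReal.coe_rpow]
        have h2 : (0:ℝ) ≤ (t * ((‖a‖+1) ^ (t-1))) * ε := by positivity
        linarith
      exact add_le_add_right hεc _
    · have h := scalar_base_bound (x := (x:ℝ)) (M := ‖a‖) x.coe_nonneg hxM
        ε.coe_nonneg ht1 (by exact_mod_cast hε1)
      rw [← NNReal.coe_le_coe]
      push_cast [NNReal.coe_rpow]
      refine h.trans ?_
      rw [hcc, hcr]
      linarith
  have key2 : ∀ x ∈ spectrum ℝ≥0 a, x ^ (t:ℝ) ≤ (x + ε) ^ (t:ℝ) + c := by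
    intro x _
    exact (NNReal.rpow_le_rpow (le_add_of_nonneg_right ε.2) ht).trans
      (le_add_of_nonneg_right c.2)
  have heq := add_algebraMap_rpow ha ε ht
  rw [heq, CFC.rpow_def]
  have hres := cfc_dist_le ha key key2
    (((NNReal.continuous_rpow_const ht).comp' (continuous_id.add continuous_const)).continuousOn)
    ((NNReal.continuous_rpow_const ht).continuousOn)
  rwa [hcc] at hres

lemma spectralRadius_mul_comm' (x y : A) :
    spectralRadius ℂ (x * y) = spectralRadius ℂ (y * x) := by
  have key : ∀ c d : A, spectralRadius ℂ (c * d) ≤ spectralRadius ℂ (d * c) := by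
    intro c d
    rw [spectralRadius, spectralRadius]
    refine iSup₂_le fun k hk => ?_
    rcases eq_or_ne k 0 with rfl | h0
    · simp
    · have hk' : k ∈ spectrum ℂ (c * d) \ {0} := ⟨hk, h0⟩
      rw [spectrum.nonzero_mul_comm] at hk'
      exact le_iSup₂ (f := fun k (_ : k ∈ spectrum ℂ (d * c)) => (‖k‖₊ : ℝ≥0∞)) k hk'.1
  exact le_antisymm (key x y) (key y x)

section LH
variable {a b : A}

lemma claim1 (hbu : IsUnit b) (hb0 : 0 ≤ b) (ha0 : 0 ≤ a) (u : ℝ) :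
    a ^ u ≤ b ^ u ↔ ‖b ^ (-(u/2)) * a ^ u * b ^ (-(u/2))‖ ≤ 1 := by
  have hσ : 0 ∉ spectrum ℝ≥0 b := spectrum.zero_notMem ℝ≥0 hbu
  have hcs : star (b ^ (-(u/2))) = b ^ (-(u/2)) := star_rpow b _
  have hE0 : (0:A) ≤ b ^ (-(u/2)) * a ^ u * b ^ (-(u/2)) := by
    have h := star_left_conjugate_nonneg (CFC.rpow_nonneg (a := a) (y := u)) (b ^ (-(u/2)))
    rwa [hcs] at h
  have h1 : b ^ (u/2) * b ^ (-(u/2)) = 1 := by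
    rw [← CFC.rpow_add hbu]
    have he : u/2 + -(u/2) = 0 := by ring
    rw [he, CFC.rpow_zero b hb0]
  have h2 : b ^ (-(u/2)) * b ^ (u/2) = 1 := by
    rw [← CFC.rpow_add hbu]
    have he : -(u/2) + u/2 = 0 := by ring
    rw [he, CFC.rpow_zero b hb0]
  constructor
  · intro h
    have hc := star_left_conjugate_le_conjugate h (b ^ (-(u/2)))
    rw [hcs] at hc
    have hcb : b ^ (-(u/2)) * b ^ u * b ^ (-(u/2)) = 1 := by
      rw [← CFC.rpow_add hbu, ← CFC.rpow_add hbu]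
      have he : -(u/2) + u + -(u/2) = 0 := by ring
      rw [he, CFC.rpow_zero b hb0]
    rw [hcb] at hc
    exact (CStarAlgebra.norm_le_one_iff_of_nonneg _ hE0).mpr hc
  · intro h
    have hE1 : b ^ (-(u/2)) * a ^ u * b ^ (-(u/2)) ≤ 1 :=
      (CStarAlgebra.norm_le_one_iff_of_nonneg _ hE0).mp h
    have hc := star_left_conjugate_le_conjugate hE1 (b ^ (u/2))
    rw [star_rpow] at hc
    have hr : b ^ (u/2) * (b ^ (-(u/2)) * a ^ u * b ^ (-(u/2))) * b ^ (u/2) = a ^ u := by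
      have e1 : b ^ (u/2) * (b ^ (-(u/2)) * a ^ u * b ^ (-(u/2))) * b ^ (u/2)
          = (b ^ (u/2) * b ^ (-(u/2))) * a ^ u * (b ^ (-(u/2)) * b ^ (u/2)) := by
        noncomm_ring
      rw [e1, h1, h2, one_mul, mul_one]
    have hl : b ^ (u/2) * 1 * b ^ (u/2) = b ^ u := by
      rw [mul_one, ← CFC.rpow_add hbu]
      have he : u/2 + u/2 = u := by ring
      rw [he]
    rwa [hr, hl] at hc

lemma half_norm (hbu : IsUnit b) (hb0 : 0 ≤ b) (ha0 : 0 ≤ a) {s : ℝ} (hs0 : 0 ≤ s)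
    (hs : a ^ s ≤ b ^ s) : ‖b ^ (-(s/2)) * a ^ (s/2)‖ ≤ 1 := by
  set y := b ^ (-(s/2)) * a ^ (s/2) with hy
  have hss : s/2 + s/2 = s := by ring
  have haa : a ^ (s/2) * a ^ (s/2) = a ^ s := by
    rw [← rpow_add_of_nonneg ha0 (by linarith) (by linarith), hss]
  have hyy : y * star y = b ^ (-(s/2)) * a ^ s * b ^ (-(s/2)) := by
    rw [hy, star_mul, star_rpow, star_rpow]
    calc b ^ (-(s/2)) * a ^ (s/2) * (a ^ (s/2) * b ^ (-(s/2)))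
        = b ^ (-(s/2)) * (a ^ (s/2) * a ^ (s/2)) * b ^ (-(s/2)) := by noncomm_ring
      _ = b ^ (-(s/2)) * a ^ s * b ^ (-(s/2)) := by rw [haa]
  have hb1 : ‖y * star y‖ ≤ 1 := by
    rw [hyy]; exact (claim1 hbu hb0 ha0 s).mp hs
  have hcs : ‖y * star y‖ = ‖y‖ * ‖y‖ := CStarRing.norm_self_mul_star
  nlinarith [norm_nonneg y]

lemma midpoint (hbu : IsUnit b) (hb0 : 0 ≤ b) (ha0 : 0 ≤ a) {s t : ℝ}
    (hs0 : 0 ≤ s) (ht0 : 0 ≤ t) (hs : a ^ s ≤ b ^ s) (ht : a ^ t ≤ b ^ t) :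
    a ^ ((s+t)/2) ≤ b ^ ((s+t)/2) := by
  have hσ : 0 ∉ spectrum ℝ≥0 b := spectrum.zero_notMem ℝ≥0 hbu
  set u := (s+t)/2 with hu
  have hu0 : 0 ≤ u := by rw [hu]; positivity
  refine (claim1 hbu hb0 ha0 u).mpr ?_
  set E := b ^ (-(u/2)) * a ^ u * b ^ (-(u/2)) with hE
  have hEsa : IsSelfAdjoint E := by
    show star E = E
    rw [hE]
    simp only [star_mul, star_rpow, mul_assoc]
  have h1 : (‖E‖₊ : ℝ≥0∞) = spectralRadius ℂ (a ^ u * b ^ (-u)) := by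
    rw [← hEsa.spectralRadius_eq_nnnorm]
    calc spectralRadius ℂ E
        = spectralRadius ℂ ((b ^ (-(u/2))) * (a ^ u * b ^ (-(u/2)))) := by
          rw [hE, mul_assoc]
      _ = spectralRadius ℂ ((a ^ u * b ^ (-(u/2))) * (b ^ (-(u/2)))) :=
          spectralRadius_mul_comm' _ _
      _ = spectralRadius ℂ (a ^ u * b ^ (-u)) := by
          rw [mul_assoc, ← CFC.rpow_add hbu]
          have he : -(u/2) + -(u/2) = -u := by ring
          rw [he]
  have hsplit_a : a ^ u = a ^ (s/2) * a ^ (t/2) := by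
    rw [← rpow_add_of_nonneg ha0 (by linarith) (by linarith)]
    congr 1; rw [hu]; ring
  have hsplit_b : b ^ (-u) = b ^ (-(t/2)) * b ^ (-(s/2)) := by
    rw [← CFC.rpow_add hbu]
    congr 1; rw [hu]; ring
  have hns : ‖b ^ (-(s/2)) * a ^ (s/2)‖₊ ≤ 1 := by
    have h := half_norm hbu hb0 ha0 hs0 hs
    rw [← NNReal.coe_le_coe, coe_nnnorm, NNReal.coe_one]; exact h
  have hnt : ‖a ^ (t/2) * b ^ (-(t/2))‖₊ ≤ 1 := by
    have h := half_norm hbu hb0 ha0 ht0 ht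
    have he : a ^ (t/2) * b ^ (-(t/2)) = star (b ^ (-(t/2)) * a ^ (t/2)) := by
      rw [star_mul, star_rpow, star_rpow]
    rw [he, nnnorm_star, ← NNReal.coe_le_coe, coe_nnnorm, NNReal.coe_one]; exact h
  have h2 : spectralRadius ℂ (a ^ u * b ^ (-u)) ≤ 1 := by
    calc spectralRadius ℂ (a ^ u * b ^ (-u))
        = spectralRadius ℂ ((a ^ (s/2)) * (a ^ (t/2) * b ^ (-(t/2)) * b ^ (-(s/2)))) := by
          rw [hsplit_a, hsplit_b]; simp only [mul_assoc]
      _ = spectralRadius ℂ ((a ^ (t/2) * b ^ (-(t/2)) * b ^ (-(s/2))) * (a ^ (s/2))) :=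
          spectralRadius_mul_comm' _ _
      _ ≤ ‖(a ^ (t/2) * b ^ (-(t/2)) * b ^ (-(s/2))) * (a ^ (s/2))‖₊ :=
          spectrum.spectralRadius_le_nnnorm _
      _ ≤ ((‖a ^ (t/2) * b ^ (-(t/2))‖₊ * ‖b ^ (-(s/2)) * a ^ (s/2)‖₊ : ℝ≥0) : ℝ≥0∞) := by
          rw [ENNReal.coe_le_coe]
          calc ‖(a ^ (t/2) * b ^ (-(t/2)) * b ^ (-(s/2))) * (a ^ (s/2))‖₊
              = ‖(a ^ (t/2) * b ^ (-(t/2))) * (b ^ (-(s/2)) * a ^ (s/2))‖₊ := by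
                rw [mul_assoc]
            _ ≤ _ := nnnorm_mul_le _ _
      _ ≤ 1 := by
          rw [← ENNReal.coe_one, ENNReal.coe_le_coe]
          exact mul_le_one' hnt hns
  have h3 : (‖E‖₊ : ℝ≥0∞) ≤ 1 := h1 ▸ h2
  have h4 : ‖E‖₊ ≤ 1 := by exact_mod_cast h3
  calc ‖E‖ = ((‖E‖₊ : ℝ≥0) : ℝ) := (coe_nnnorm E).symm
    _ ≤ 1 := by exact_mod_cast h4

end LH
section LH2
variable {a b : A}
open Filter

lemma dyadic (hbu : IsUnit b) (hb0 : 0 ≤ b) (ha0 : 0 ≤ a) (hab : a ≤ b) :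
    ∀ n k : ℕ, k ≤ 2^n → a ^ ((k : ℝ)/2^n) ≤ b ^ ((k:ℝ)/2^n) := by
  intro n
  induction n with
  | zero =>
    intro k hk
    interval_cases k
    · norm_num [CFC.rpow_zero a ha0, CFC.rpow_zero b hb0]
    · norm_num [CFC.rpow_one a ha0, CFC.rpow_one b hb0, hab]
  | succ n ih =>
    intro k hk
    have h2e : (2:ℕ)^(n+1) = 2 * 2^n := by rw [pow_succ]; ring
    rcases Nat.even_or_odd k with ⟨m, hm⟩ | ⟨m, hm⟩
    · subst hm
      have hmn : m ≤ 2^n := by omega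
      have he : ((m + m : ℕ) : ℝ)/2^(n+1) = (m:ℝ)/2^n := by
        push_cast; field_simp; ring
      rw [he]; exact ih m hmn
    · subst hm
      have hmn : m + 1 ≤ 2^n := by omega
      have key := midpoint hbu hb0 ha0 (s := (m:ℝ)/2^n) (t := ((m+1:ℕ):ℝ)/2^n)
        (by positivity) (by positivity) (ih m (by omega)) (ih (m+1) hmn)
      have he : ((2*m+1 : ℕ):ℝ)/2^(n+1) = ((m:ℝ)/2^n + ((m+1:ℕ):ℝ)/2^n)/2 := by
        push_cast; field_simp; ring
      rw [he]; exact key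

lemma rpow_exponent_dist {a : A} (ha : 0 ≤ a) {α v w : ℝ} (hα : 0 < α) (hαv : α ≤ v)
    (hvw : v ≤ w) (hw : w ≤ 1) :
    ‖a ^ w - a ^ v‖ ≤ 3 * ((w - v) * (1/α + (‖a‖+2)^3)) := by
  have hv0 : 0 < v := hα.trans_le hαv
  have hw0 : 0 < w := hv0.trans_le hvw
  have hCnn : (0:ℝ) ≤ 1/α + (‖a‖+2)^3 := by positivity
  have hcrnn : (0:ℝ) ≤ (w - v) * (1/α + (‖a‖+2)^3) :=
    mul_nonneg (by linarith) hCnn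
  set c : ℝ≥0 := ((w - v) * (1/α + (‖a‖+2)^3)).toNNReal with hc
  have hcc : (c:ℝ) = (w - v) * (1/α + (‖a‖+2)^3) := Real.coe_toNNReal _ hcrnn
  have hbd : ∀ x ∈ spectrum ℝ≥0 a, |(x:ℝ) ^ w - (x:ℝ) ^ v| ≤ (c:ℝ) := by
    intro x hx
    have hxM : (x:ℝ) ≤ ‖a‖ := by
      have h := spec_le_nnnorm hx; exact_mod_cast h
    rw [hcc]
    exact scalar_exp_bound x.coe_nonneg hxM hα hαv hvw hw
  have key1 : ∀ x ∈ spectrum ℝ≥0 a, x ^ (w:ℝ) ≤ x ^ (v:ℝ) + c := by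
    intro x hx
    have h := hbd x hx
    rw [← NNReal.coe_le_coe]
    push_cast [NNReal.coe_rpow]
    have := abs_le.mp h
    linarith [this.2]
  have key2 : ∀ x ∈ spectrum ℝ≥0 a, x ^ (v:ℝ) ≤ x ^ (w:ℝ) + c := by
    intro x hx
    have h := hbd x hx
    rw [← NNReal.coe_le_coe]
    push_cast [NNReal.coe_rpow]
    have := abs_le.mp h
    linarith [this.1]
  have hres := cfc_dist_le ha key1 key2
    ((NNReal.continuous_rpow_const hw0.le).continuousOn)
    ((NNReal.continuous_rpow_const hv0.le).continuousOn)
  rw [CFC.rpow_def, CFC.rpow_def]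
  rwa [hcc] at hres

lemma lh_unit (hbu : IsUnit b) (ha0 : 0 ≤ a) (hab : a ≤ b) {s : ℝ}
    (hs0 : 0 ≤ s) (hs1 : s ≤ 1) : a ^ s ≤ b ^ s := by
  have hb0 : 0 ≤ b := ha0.trans hab
  rcases eq_or_lt_of_le hs0 with rfl | hs
  · rw [CFC.rpow_zero a ha0, CFC.rpow_zero b hb0]
  set q : ℕ → ℝ := fun n => (⌊s * 2^n⌋₊ : ℝ)/2^n with hq
  have h2n : ∀ n : ℕ, (0:ℝ) < 2^n := fun n => by positivity
  have hqle : ∀ n, q n ≤ s := by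
    intro n
    rw [hq, div_le_iff₀ (h2n n)]
    exact Nat.floor_le (by positivity)
  have hqge : ∀ n, s - 1/2^n ≤ q n := by
    intro n
    have h := (Nat.lt_floor_add_one (s * 2^n)).le
    rw [hq, sub_le_iff_le_add, ← add_div, le_div_iff₀ (h2n n)]
    linarith
  have hqK : ∀ n, ⌊s * 2^n⌋₊ ≤ 2^n := by
    intro n
    have h : s * 2^n ≤ 2^n := by nlinarith [h2n n]
    calc ⌊s * 2^n⌋₊ ≤ ⌊((2^n : ℕ) : ℝ)⌋₊ := Nat.floor_le_floor (by push_cast; linarith)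
      _ = 2^n := Nat.floor_natCast _
  have hq0 : ∀ n, 0 ≤ q n := fun n => by positivity
  have hdy : ∀ n, a ^ q n ≤ b ^ q n := fun n => dyadic hbu hb0 ha0 hab n _ (hqK n)
  have hhalf : Tendsto (fun n : ℕ => 1/(2:ℝ)^n) atTop (𝓝 0) := by
    simpa [one_div, inv_pow] using tendsto_pow_atTop_nhds_zero_of_lt_one
      (by norm_num : (0:ℝ) ≤ 1/2) (by norm_num : (1:ℝ)/2 < 1)
  have hqs : Tendsto q atTop (𝓝 s) := by
    have hlow : Tendsto (fun n : ℕ => s - 1/(2:ℝ)^n) atTop (𝓝 s) := by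
      simpa using tendsto_const_nhds.sub hhalf
    exact tendsto_of_tendsto_of_tendsto_of_le_of_le hlow tendsto_const_nhds hqge hqle
  have hev : ∀ᶠ n in atTop, s/2 ≤ q n :=
    hqs.eventually (eventually_ge_nhds (by linarith : s/2 < s))
  have hdiff : Tendsto (fun n => s - q n) atTop (𝓝 0) := by
    have h := (tendsto_const_nhds (x := s) (f := atTop (α := ℕ))).sub hqs
    simpa using h
  have tend : ∀ x : A, 0 ≤ x → Tendsto (fun n => x ^ q n) atTop (𝓝 (x ^ s)) := by
    intro x hx
    rw [tendsto_iff_dist_tendsto_zero]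
    have hbnd : ∀ᶠ n in atTop,
        dist (x ^ q n) (x ^ s) ≤ 3 * ((s - q n) * (1/(s/2) + (‖x‖+2)^3)) := by
      filter_upwards [hev] with n hn
      rw [dist_eq_norm, norm_sub_rev]
      exact rpow_exponent_dist hx (by linarith : (0:ℝ) < s/2) hn (hqle n) hs1
    have hg : Tendsto (fun n => 3 * ((s - q n) * (1/(s/2) + (‖x‖+2)^3))) atTop (𝓝 0) := by
      have h2 := (hdiff.mul_const (1/(s/2) + (‖x‖+2)^3)).const_mul 3
      simpa using h2
    exact squeeze_zero' (Eventually.of_forall fun n => dist_nonneg) hbnd hg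
  have hcl := (CStarAlgebra.isClosed_nonneg (A := A)).mem_of_tendsto
    ((tend b hb0).sub (tend a ha0))
    (Eventually.of_forall fun n => by simpa using sub_nonneg.mpr (hdy n))
  exact sub_nonneg.mp hcl

theorem lh {a b : A} (ha0 : 0 ≤ a) (hab : a ≤ b) {s : ℝ} (hs0 : 0 ≤ s) (hs1 : s ≤ 1) :
    a ^ s ≤ b ^ s := by
  have hb0 : 0 ≤ b := ha0.trans hab
  rcases eq_or_lt_of_le hs0 with rfl | hs
  · rw [CFC.rpow_zero a ha0, CFC.rpow_zero b hb0]
  have key : ∀ n : ℕ, a ^ s ≤ b ^ s + algebraMap ℝ≥0 A ((((n:ℝ≥0)+1)⁻¹) ^ (s:ℝ)) := by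
    intro n
    set ε : ℝ≥0 := ((n:ℝ≥0)+1)⁻¹ with hε
    have hεne : ε ≠ 0 := by
      rw [hε]
      exact inv_ne_zero (add_pos_of_nonneg_of_pos zero_le one_pos).ne'
    have halg0 : (0:A) ≤ algebraMap ℝ≥0 A ε := algebraMap_nonneg' ε
    have hbu : IsUnit (b + algebraMap ℝ≥0 A ε) :=
      CStarAlgebra.isUnit_of_le _ (le_add_of_nonneg_left hb0)
        (((isUnit_iff_ne_zero.mpr hεne).map (algebraMap ℝ≥0 A)).isStrictlyPositive halg0)
    have h1 : a ≤ b + algebraMap ℝ≥0 A ε := hab.trans (le_add_of_nonneg_right halg0)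
    exact (lh_unit hbu ha0 h1 hs0 hs1).trans (perturb_rpow_le hb0 ε hs0 hs1)
  have halg : Tendsto (fun n : ℕ => algebraMap ℝ≥0 A ((((n:ℝ≥0)+1)⁻¹) ^ (s:ℝ)))
      atTop (𝓝 0) := by
    rw [tendsto_zero_iff_norm_tendsto_zero]
    have he : ∀ n : ℕ, ‖algebraMap ℝ≥0 A ((((n:ℝ≥0)+1)⁻¹) ^ (s:ℝ))‖
        = (1/((n:ℝ)+1)) ^ (s:ℝ) := by
      intro n
      rw [norm_algebraMap_nnreal, NNReal.coe_rpow]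
      norm_num
    simp only [he]
    have h1 := tendsto_one_div_add_atTop_nhds_zero_nat (𝕜 := ℝ)
    simpa [Real.zero_rpow (ne_of_gt hs)] using h1.rpow_const (Or.inr hs0)
  have hF : Tendsto (fun n : ℕ => b ^ s + algebraMap ℝ≥0 A ((((n:ℝ≥0)+1)⁻¹) ^ (s:ℝ)) - a ^ s)
      atTop (𝓝 (b ^ s - a ^ s)) := by
    have h2 := (tendsto_const_nhds (x := b ^ s - a ^ s) (f := atTop (α := ℕ))).add halg
    have hfe : (fun n : ℕ => b ^ s + algebraMap ℝ≥0 A ((((n:ℝ≥0)+1)⁻¹) ^ (s:ℝ)) - a ^ s)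
        = (fun n : ℕ => (b ^ s - a ^ s) + algebraMap ℝ≥0 A ((((n:ℝ≥0)+1)⁻¹) ^ (s:ℝ))) := by
      funext n; abel
    rw [hfe]
    simpa using h2
  have hcl := (CStarAlgebra.isClosed_nonneg (A := A)).mem_of_tendsto hF
    (Eventually.of_forall fun n => by simpa using sub_nonneg.mpr (key n))
  exact sub_nonneg.mp hcl

lemma rpow_dist_le {x y : A} (hx : 0 ≤ x) (hy : 0 ≤ y) {t : ℝ} (ht0 : 0 < t) (ht1 : t ≤ 1) :
    ‖x ^ t - y ^ t‖ ≤ 3 * ‖x - y‖ ^ t := by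
  set d : ℝ≥0 := ‖x - y‖₊ with hd
  have halg : algebraMap ℝ≥0 A d = algebraMap ℝ A ‖x - y‖ := by
    rw [algebraMap_eq', hd, coe_nnnorm]
  have hsa : IsSelfAdjoint (x - y) :=
    (IsSelfAdjoint.of_nonneg hx).sub (IsSelfAdjoint.of_nonneg hy)
  have hxy : x ≤ y + algebraMap ℝ≥0 A d := by
    have h1 : x - y ≤ algebraMap ℝ A ‖x - y‖ := IsSelfAdjoint.le_algebraMap_norm_self hsa
    rw [← halg] at h1
    rw [add_comm]
    exact sub_le_iff_le_add.mp h1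
  have hyx : y ≤ x + algebraMap ℝ≥0 A d := by
    have hsa' : IsSelfAdjoint (y - x) :=
      (IsSelfAdjoint.of_nonneg hy).sub (IsSelfAdjoint.of_nonneg hx)
    have h1 : y - x ≤ algebraMap ℝ A ‖y - x‖ := IsSelfAdjoint.le_algebraMap_norm_self hsa'
    rw [norm_sub_rev, ← halg] at h1
    rw [add_comm]
    exact sub_le_iff_le_add.mp h1
  have h2 : x ^ t ≤ y ^ t + algebraMap ℝ≥0 A (d ^ (t:ℝ)) :=
    (lh hx hxy ht0.le ht1).trans (perturb_rpow_le hy d ht0.le ht1)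
  have h3 : y ^ t ≤ x ^ t + algebraMap ℝ≥0 A (d ^ (t:ℝ)) :=
    (lh hy hyx ht0.le ht1).trans (perturb_rpow_le hx d ht0.le ht1)
  have hs := sandwich (z := x ^ t - y ^ t) (c := d ^ (t:ℝ)) ?_ ?_
  · rw [hd] at hs
    rwa [NNReal.coe_rpow, coe_nnnorm] at hs
  · rwa [sub_le_iff_le_add, add_comm]
  · rwa [neg_le_sub_iff_le_add]

lemma tendsto_perturb {a : A} (ha : 0 ≤ a) {t : ℝ} (ht : 0 ≤ t) :
    Tendsto (fun n : ℕ => (a + algebraMap ℝ≥0 A (((n:ℝ≥0)+1)⁻¹)) ^ t)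
      atTop (𝓝 (a ^ t)) := by
  rcases eq_or_lt_of_le ht with rfl | ht'
  · have he : ∀ n : ℕ, (a + algebraMap ℝ≥0 A (((n:ℝ≥0)+1)⁻¹)) ^ (0:ℝ) = (1:A) := fun n =>
      CFC.rpow_zero _ (add_algebraMap_nonneg ha _)
    simp only [he, CFC.rpow_zero a ha]
    exact tendsto_const_nhds
  rw [tendsto_iff_dist_tendsto_zero]
  have hb : ∀ n : ℕ, dist ((a + algebraMap ℝ≥0 A (((n:ℝ≥0)+1)⁻¹)) ^ t) (a ^ t)
      ≤ 3 * (((((n:ℝ≥0)+1)⁻¹ : ℝ≥0) : ℝ) ^ t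
        + (t * ((‖a‖+1) ^ (t-1))) * ((((n:ℝ≥0)+1)⁻¹ : ℝ≥0) : ℝ)) := by
    intro n
    rw [dist_eq_norm]
    refine perturb_rpow_dist ha ?_ ht
    calc ((n:ℝ≥0)+1)⁻¹ ≤ 1⁻¹ := by
          gcongr
          exact le_add_of_nonneg_left zero_le
      _ = 1 := inv_one
  apply squeeze_zero (fun n => dist_nonneg) hb
  have h1 : Tendsto (fun n : ℕ => ((((n:ℝ≥0)+1)⁻¹ : ℝ≥0) : ℝ)) atTop (𝓝 0) := by
    have he : ∀ n : ℕ, ((((n:ℝ≥0)+1)⁻¹ : ℝ≥0) : ℝ) = 1/((n:ℝ)+1) := by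
      intro n; push_cast; norm_num
    simp only [he]
    exact tendsto_one_div_add_atTop_nhds_zero_nat
  have h2 : Tendsto (fun n : ℕ => ((((n:ℝ≥0)+1)⁻¹ : ℝ≥0) : ℝ) ^ t) atTop (𝓝 0) := by
    simpa [Real.zero_rpow (ne_of_gt ht')] using h1.rpow_const (Or.inr ht)
  have h3 := ((h2.add (h1.const_mul (t * ((‖a‖+1) ^ (t-1))))).const_mul 3)
  simpa [mul_comm] using h3
end LH2
/-- Conjugation by a unitary as a star algebra homomorphism. -/
def conjSAH (u : A) (hu : u ∈ unitary A) : A →⋆ₐ[ℝ] A where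
  toFun x := u * x * star u
  map_one' := by simpa using (Unitary.mem_iff.mp hu).2
  map_mul' x y := by
    have h := (Unitary.mem_iff.mp hu).1
    simp only [mul_assoc]
    rw [← mul_assoc (star u) u, h, one_mul]
  map_zero' := by simp
  map_add' x y := by
    show u * (x + y) * star u = u * x * star u + u * y * star u
    rw [mul_add, add_mul]
  commutes' r := by
    have h2 := (Unitary.mem_iff.mp hu).2
    show u * algebraMap ℝ A r * star u = algebraMap ℝ A r
    rw [Algebra.algebraMap_eq_smul_one, mul_smul_comm, mul_one, smul_mul_assoc, h2]
  map_star' x := by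
    simp only [star_mul, star_star, mul_assoc]

lemma conjSAH_continuous (u : A) (hu : u ∈ unitary A) : Continuous (conjSAH u hu) := by
  show Continuous fun x : A => u * x * star u
  fun_prop

lemma rpow_conj_unitary {u X : A} (hu : u ∈ unitary A) (hX : 0 ≤ X) {y : ℝ} (hy : 0 ≤ y) :
    (u * X * star u) ^ y = u * X ^ y * star u := by
  have hq : (0:A) ≤ u * X * star u := by
    have h := star_left_conjugate_nonneg hX (star u)
    rwa [star_star] at h
  have h := StarAlgHomClass.map_cfc (R := ℝ≥0) (S := ℝ) (conjSAH u hu)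
    (fun x : ℝ≥0 => x ^ y) X (NNReal.continuousOn_rpow_const (Or.inr hy))
    (conjSAH_continuous u hu) hX hq
  rw [CFC.rpow_def, CFC.rpow_def]
  exact h.symm

/-- Key identity `(T T^*)^y = T (T^* T)^(y-1) T^*` for invertible `T`. -/
lemma conj_rpow_key {T : A} (hT : IsUnit T) {y : ℝ} (hy : 0 ≤ y) :
    (T * star T) ^ y = T * (star T * T) ^ (y - 1) * star T := by
  have hX0 : (0:A) ≤ star T * T := star_mul_self_nonneg T
  have hXu : IsUnit (star T * T) := hT.star.mul hT
  have hσX : 0 ∉ spectrum ℝ≥0 (star T * T) := spectrum.zero_notMem ℝ≥0 hXu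
  set X := star T * T with hX
  set Xh := X ^ (-(1/2) : ℝ) with hXh
  set Xp := X ^ ((1/2) : ℝ) with hXp
  clear_value X Xh Xp
  have h1 : Xp * Xh = 1 := by
    rw [hXp, hXh, ← CFC.rpow_add hXu]
    have he : (1/2:ℝ) + -(1/2) = 0 := by ring
    rw [he, CFC.rpow_zero X hX0]
  have h2 : Xh * Xp = 1 := by
    rw [hXp, hXh, ← CFC.rpow_add hXu]
    have he : (-(1/2):ℝ) + 1/2 = 0 := by ring
    rw [he, CFC.rpow_zero X hX0]
  have h3 : Xp * Xp = X := by
    rw [hXp, ← CFC.rpow_add hXu]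
    have he : (1/2:ℝ) + 1/2 = 1 := by ring
    rw [he, CFC.rpow_one X hX0]
  have hsh : star Xh = Xh := by rw [hXh]; exact star_rpow X _
  have hsp : star Xp = Xp := by rw [hXp]; exact star_rpow X _
  set u := T * Xh with hudef
  clear_value u
  have hus : star u = Xh * star T := by rw [hudef, star_mul, hsh]
  have hXhXXh : Xh * X * Xh = 1 := by
    rw [← h3]
    calc Xh * (Xp * Xp) * Xh = (Xh * Xp) * (Xp * Xh) := by noncomm_ring
      _ = 1 := by rw [h1, h2, one_mul]
  have huu : star u * u = 1 := by
    rw [hus, hudef]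
    calc Xh * star T * (T * Xh) = Xh * (star T * T) * Xh := by noncomm_ring
      _ = Xh * X * Xh := by rw [← hX]
      _ = 1 := hXhXXh
  have huIsUnit : IsUnit u := by
    rw [hudef, hXh]
    exact hT.mul (isUnit_rpow hXu hX0 _)
  have huu' : u * star u = 1 := by
    obtain ⟨U, hU⟩ := huIsUnit
    subst hU
    calc (↑U : A) * star ↑U = ↑U * star ↑U * (↑U * ↑U⁻¹) := by
          rw [Units.mul_inv, mul_one]
      _ = ↑U * (star ↑U * ↑U) * ↑U⁻¹ := by noncomm_ring
      _ = ↑U * ↑U⁻¹ := by rw [huu, mul_one]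
      _ = 1 := Units.mul_inv U
  have humem : u ∈ unitary A := Unitary.mem_iff.mpr ⟨huu, huu'⟩
  have hTu : T = u * Xp := by
    rw [hudef, mul_assoc, h2, mul_one]
  have hTT : T * star T = u * X * star u := by
    rw [hus, hudef]
    calc T * star T = T * (Xh * X * Xh) * star T := by rw [hXhXXh, mul_one]
      _ = (T * Xh) * X * (Xh * star T) := by noncomm_ring
  have hmain : (T * star T) ^ y = u * X ^ y * star u := by
    rw [hTT]; exact rpow_conj_unitary humem hX0 hy
  have hXy : X ^ y = Xp * X ^ (y - 1) * Xp := by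
    rw [hXp, ← CFC.rpow_add hXu, ← CFC.rpow_add hXu]
    congr 1; ring
  rw [hmain, hXy, hTu, star_mul, hsp]
  noncomm_ring

lemma rpow_antitone {x y : A} (hy0 : 0 ≤ y) (hxu : IsUnit x) (hyu : IsUnit y) (hyx : y ≤ x)
    {s : ℝ} (hs0 : -1 ≤ s) (hs1 : s ≤ 0) : x ^ s ≤ y ^ s := by
  have hx0 : 0 ≤ x := hy0.trans hyx
  have hxs : (↑hxu.unit : A) = x := hxu.unit_spec
  have hys : (↑hyu.unit : A) = y := hyu.unit_spec
  have hinv : (↑hxu.unit⁻¹ : A) ≤ ↑hyu.unit⁻¹ :=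
    CStarAlgebra.inv_le_inv (a := hyu.unit) (b := hxu.unit)
      (by rw [hys]; exact hy0) (by rw [hys, hxs]; exact hyx)
  have hinvx0 : (0:A) ≤ ↑hxu.unit⁻¹ := by
    have h := CFC.rpow_neg_one_eq_inv hxu.unit (by rw [hxs]; exact hx0)
    rw [← h]
    exact CFC.rpow_nonneg
  have hLH := lh (a := (↑hxu.unit⁻¹ : A)) (b := (↑hyu.unit⁻¹ : A)) hinvx0 hinv
    (s := -s) (by linarith) (by linarith)
  have ex : (↑hxu.unit⁻¹ : A) ^ (-s) = x ^ s := by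
    have h := CFC.rpow_neg hxu.unit (-s) (by rw [hxs]; exact hx0)
    rw [neg_neg, hxs] at h
    exact h.symm
  have ey : (↑hyu.unit⁻¹ : A) ^ (-s) = y ^ s := by
    have h := CFC.rpow_neg hyu.unit (-s) (by rw [hys]; exact hy0)
    rw [neg_neg, hys] at h
    exact h.symm
  rwa [ex, ey] at hLH

lemma onestep {a b : A} (hb0 : 0 ≤ b) (hba : b ≤ a) (hau : IsUnit a) (hbu : IsUnit b)
    {p r : ℝ} (hp : 1 ≤ p) (hr0 : 0 ≤ r) (hr1 : r ≤ 1) :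
    (a ^ (r/2) * b ^ p * a ^ (r/2)) ^ ((1+r)/(p+r)) ≤ a ^ (1+r) := by
  have ha0 : 0 ≤ a := hb0.trans hba
  have hσa : 0 ∉ spectrum ℝ≥0 a := spectrum.zero_notMem ℝ≥0 hau
  have hσb : 0 ∉ spectrum ℝ≥0 b := spectrum.zero_notMem ℝ≥0 hbu
  set δ := (1+r)/(p+r) with hδ
  have hpr : 0 < p + r := by linarith
  have hδ0 : 0 < δ := by rw [hδ]; positivity
  have hδ1 : δ ≤ 1 := by rw [hδ, div_le_one hpr]; linarith
  set T := a ^ (r/2) * b ^ (p/2) with hT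
  have hTu : IsUnit T := (isUnit_rpow hau ha0 _).mul (isUnit_rpow hbu hb0 _)
  have hbb : b ^ (p/2) * b ^ (p/2) = b ^ p := by
    rw [← CFC.rpow_add hbu]; congr 1; ring
  have haa : a ^ (r/2) * a ^ (r/2) = a ^ r := by
    rw [← CFC.rpow_add hau]; congr 1; ring
  have hTT : T * star T = a ^ (r/2) * b ^ p * a ^ (r/2) := by
    rw [hT, star_mul, star_rpow, star_rpow, ← hbb]
    noncomm_ring
  have hXeq : star T * T = b ^ (p/2) * a ^ r * b ^ (p/2) := by
    rw [hT, star_mul, star_rpow, star_rpow, ← haa]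
    noncomm_ring
  have hkey := conj_rpow_key hTu hδ0.le
  have hr' : b ^ r ≤ a ^ r := lh hb0 hba hr0 hr1
  have hYX : b ^ (p+r) ≤ star T * T := by
    have hc := star_left_conjugate_le_conjugate hr' (b ^ (p/2))
    rw [star_rpow] at hc
    have hl : b ^ (p/2) * b ^ r * b ^ (p/2) = b ^ (p+r) := by
      rw [← CFC.rpow_add hbu, ← CFC.rpow_add hbu]; congr 1; ring
    rw [hl, ← hXeq] at hc
    exact hc
  have hXu : IsUnit (star T * T) := hTu.star.mul hTu
  have hYu : IsUnit (b ^ (p+r)) := isUnit_rpow hbu hb0 _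
  have hanti : (star T * T) ^ (δ - 1) ≤ (b ^ (p+r)) ^ (δ - 1) :=
    rpow_antitone CFC.rpow_nonneg hXu hYu hYX (by linarith) (by linarith)
  have hbpow : (b ^ (p+r)) ^ (δ-1) = b ^ (1-p) := by
    rw [CFC.rpow_rpow b (p+r) (δ-1) (ne_of_gt hpr) (hbu.isStrictlyPositive hb0)]
    congr 1; rw [hδ]; field_simp; ring
  have hconj := star_right_conjugate_le_conjugate (hanti.trans_eq hbpow) T
  have hmid : T * b ^ (1-p) * star T = a ^ (r/2) * b * a ^ (r/2) := by
    rw [hT, star_mul, star_rpow, star_rpow]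
    have hb3 : b ^ (p/2) * (b ^ (1-p) * b ^ (p/2)) = b := by
      rw [← CFC.rpow_add hbu, ← CFC.rpow_add hbu]
      have he : p/2 + (1 - p + p/2) = 1 := by ring
      rw [he, CFC.rpow_one b hb0]
    calc a ^ (r/2) * b ^ (p/2) * b ^ (1-p) * (b ^ (p/2) * a ^ (r/2))
        = a ^ (r/2) * (b ^ (p/2) * (b ^ (1-p) * b ^ (p/2))) * a ^ (r/2) := by noncomm_ring
      _ = a ^ (r/2) * b * a ^ (r/2) := by rw [hb3]
  have hfin : a ^ (r/2) * b * a ^ (r/2) ≤ a ^ (1+r) := by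
    have hc := star_right_conjugate_le_conjugate hba (a ^ (r/2))
    rw [star_rpow] at hc
    have he : a ^ (r/2) * a * a ^ (r/2) = a ^ (1+r) := by
      have h1 : a ^ (r/2) * a = a ^ (r/2) * a ^ (1:ℝ) := by rw [CFC.rpow_one a ha0]
      rw [h1, ← CFC.rpow_add hau, ← CFC.rpow_add hau]
      congr 1; ring
    rwa [he] at hc
  calc (a ^ (r/2) * b ^ p * a ^ (r/2)) ^ δ
      = T * (star T * T) ^ (δ-1) * star T := by rw [← hTT]; exact hkey
    _ ≤ T * b ^ (1-p) * star T := hconj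
    _ = a ^ (r/2) * b * a ^ (r/2) := hmid
    _ ≤ a ^ (1+r) := hfin
lemma furuta_unit {a b : A} (hb0 : 0 ≤ b) (hba : b ≤ a) (hau : IsUnit a) (hbu : IsUnit b) :
    ∀ n : ℕ, ∀ p r : ℝ, 1 ≤ p → 0 ≤ r → r ≤ 2^n →
    (a ^ (r/2) * b ^ p * a ^ (r/2)) ^ ((1+r)/(p+r)) ≤ a ^ (1+r) := by
  have ha0 : 0 ≤ a := hb0.trans hba
  have hσa : 0 ∉ spectrum ℝ≥0 a := spectrum.zero_notMem ℝ≥0 hau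
  have hσb : 0 ∉ spectrum ℝ≥0 b := spectrum.zero_notMem ℝ≥0 hbu
  intro n
  induction n with
  | zero =>
    intro p r hp hr0 hr1
    exact onestep hb0 hba hau hbu hp hr0 (by simpa using hr1)
  | succ n ih =>
    intro p r hp hr0 hrn
    rcases le_or_gt r 1 with hle1 | hgt1
    · exact onestep hb0 hba hau hbu hp hr0 hle1
    set r' := (r-1)/2 with hr'
    have hr'0 : 0 ≤ r' := by rw [hr']; linarith
    have hr'n : r' ≤ 2^n := by
      rw [hr']
      have h2 : (2:ℝ)^(n+1) = 2*2^n := by ring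
      nlinarith [hrn]
    have hIH := ih p r' hp hr'0 hr'n
    set δ' := (1+r')/(p+r') with hδ'
    have hpr' : 0 < p + r' := by linarith
    have h1r' : 0 < 1 + r' := by linarith
    have hδ'0 : 0 < δ' := by rw [hδ']; positivity
    set C := a ^ (r'/2) * b ^ p * a ^ (r'/2) with hC
    have hC0 : 0 ≤ C := by
      rw [hC]
      have h := star_right_conjugate_nonneg (CFC.rpow_nonneg (a := b) (y := p)) (a ^ (r'/2))
      rwa [star_rpow] at h
    have hCu : IsUnit C := by
      rw [hC]
      exact ((isUnit_rpow hau ha0 _).mul (isUnit_rpow hbu hb0 _)).mul (isUnit_rpow hau ha0 _)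
    have hσC : 0 ∉ spectrum ℝ≥0 C := spectrum.zero_notMem ℝ≥0 hCu
    set a₁ := a ^ (1+r') with ha₁
    set b₁ := C ^ δ' with hb₁
    have ha₁0 : (0:A) ≤ a₁ := by rw [ha₁]; exact CFC.rpow_nonneg
    have hb₁0 : (0:A) ≤ b₁ := by rw [hb₁]; exact CFC.rpow_nonneg
    have hba₁ : b₁ ≤ a₁ := hIH
    have ha₁u : IsUnit a₁ := by rw [ha₁]; exact isUnit_rpow hau ha0 _
    have hb₁u : IsUnit b₁ := by rw [hb₁]; exact isUnit_rpow hCu hC0 _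
    set p₁ := (p+r')/(1+r') with hp₁
    have hp₁1 : 1 ≤ p₁ := by rw [hp₁, le_div_iff₀ h1r']; linarith
    have hstep := onestep hb₁0 hba₁ ha₁u hb₁u (r := 1) hp₁1 zero_le_one le_rfl
    have e1 : b₁ ^ p₁ = C := by
      rw [hb₁, CFC.rpow_rpow C δ' p₁ (ne_of_gt hδ'0) (hCu.isStrictlyPositive hC0)]
      have he : δ' * p₁ = 1 := by
        rw [hδ', hp₁]; field_simp
      rw [he, CFC.rpow_one C hC0]
    have e2 : a₁ ^ ((1:ℝ)/2) = a ^ ((1+r')/2) := by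
      rw [ha₁, CFC.rpow_rpow a (1+r') (1/2) (ne_of_gt h1r') (hau.isStrictlyPositive ha0)]
      congr 1; ring
    have e3 : a₁ ^ ((1:ℝ)+1) = a ^ (1+r) := by
      rw [ha₁, CFC.rpow_rpow a (1+r') (1+1) (ne_of_gt h1r') (hau.isStrictlyPositive ha0)]
      congr 1; rw [hr']; ring
    have e4 : a ^ ((1+r')/2) * C * a ^ ((1+r')/2) = a ^ (r/2) * b ^ p * a ^ (r/2) := by
      rw [hC]
      have hl : a ^ ((1+r')/2) * a ^ (r'/2) = a ^ (r/2) := by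
        rw [← CFC.rpow_add hau]; congr 1; rw [hr']; ring
      have hrr : a ^ (r'/2) * a ^ ((1+r')/2) = a ^ (r/2) := by
        rw [← CFC.rpow_add hau]; congr 1; rw [hr']; ring
      calc a ^ ((1+r')/2) * (a ^ (r'/2) * b ^ p * a ^ (r'/2)) * a ^ ((1+r')/2)
          = (a ^ ((1+r')/2) * a ^ (r'/2)) * b ^ p * (a ^ (r'/2) * a ^ ((1+r')/2)) := by
            noncomm_ring
        _ = a ^ (r/2) * b ^ p * a ^ (r/2) := by rw [hl, hrr]
    have e5 : ((1:ℝ)+1)/(p₁+1) = (1+r)/(p+r) := by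
      have hA : p + r' + (1+r') = p + r := by rw [hr']; ring
      have hB : p₁ + 1 = (p + r)/(1+r') := by
        rw [hp₁, div_add_one (ne_of_gt h1r'), hA]
      rw [hB, div_div_eq_mul_div]
      have h2 : ((1:ℝ)+1)*(1+r') = 1 + r := by rw [hr']; ring
      rw [h2]
    rw [show (1:ℝ)/2 = (1:ℝ)/2 from rfl] at hstep
    rw [e1, e2, e4, e5, e3] at hstep
    exact hstep

theorem furuta_cstar {a b : A} (hb0 : 0 ≤ b) (ha0 : 0 ≤ a) (hba : b ≤ a)
    {p r : ℝ} (hp : 1 ≤ p) (hr : 0 ≤ r) :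
    (a ^ (r/2) * b ^ p * a ^ (r/2)) ^ ((1+r)/(p+r)) ≤ a ^ (1+r) := by
  obtain ⟨m, hm⟩ := exists_nat_ge r
  have hm2 : r ≤ 2^m := by
    refine hm.trans ?_
    have h := (Nat.lt_two_pow_self (n := m)).le
    exact_mod_cast Nat.cast_le.mpr h
  set ε : ℕ → ℝ≥0 := fun n => ((n:ℝ≥0)+1)⁻¹ with hε
  have hεne : ∀ n, ε n ≠ 0 := fun n => by
    rw [hε]
    exact inv_ne_zero (add_pos_of_nonneg_of_pos zero_le one_pos).ne'
  have halg0 : ∀ n, (0:A) ≤ algebraMap ℝ≥0 A (ε n) := fun n => algebraMap_nonneg' _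
  have hbn0 : ∀ n, (0:A) ≤ b + algebraMap ℝ≥0 A (ε n) := fun n => add_algebraMap_nonneg hb0 _
  have han0 : ∀ n, (0:A) ≤ a + algebraMap ℝ≥0 A (ε n) := fun n => add_algebraMap_nonneg ha0 _
  have hban : ∀ n, b + algebraMap ℝ≥0 A (ε n) ≤ a + algebraMap ℝ≥0 A (ε n) := fun n =>
    add_le_add_left hba _
  have hbun : ∀ n, IsUnit (b + algebraMap ℝ≥0 A (ε n)) := fun n =>
    CStarAlgebra.isUnit_of_le _ (le_add_of_nonneg_left hb0)
      (((isUnit_iff_ne_zero.mpr (hεne n)).map (algebraMap ℝ≥0 A)).isStrictlyPositive (halg0 n))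
  have haun : ∀ n, IsUnit (a + algebraMap ℝ≥0 A (ε n)) := fun n =>
    CStarAlgebra.isUnit_of_le _ (le_add_of_nonneg_left ha0)
      (((isUnit_iff_ne_zero.mpr (hεne n)).map (algebraMap ℝ≥0 A)).isStrictlyPositive (halg0 n))
  have hstep : ∀ n, ((a + algebraMap ℝ≥0 A (ε n)) ^ (r/2) * (b + algebraMap ℝ≥0 A (ε n)) ^ p
      * (a + algebraMap ℝ≥0 A (ε n)) ^ (r/2)) ^ ((1+r)/(p+r))
      ≤ (a + algebraMap ℝ≥0 A (ε n)) ^ (1+r) := fun n =>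
    furuta_unit (hbn0 n) (hban n) (haun n) (hbun n) m p r hp hr hm2
  -- limits
  have hta : Filter.Tendsto (fun n : ℕ => (a + algebraMap ℝ≥0 A (ε n)) ^ (r/2))
      Filter.atTop (𝓝 (a ^ (r/2))) := tendsto_perturb ha0 (by linarith)
  have htb : Filter.Tendsto (fun n : ℕ => (b + algebraMap ℝ≥0 A (ε n)) ^ p)
      Filter.atTop (𝓝 (b ^ p)) := tendsto_perturb hb0 (by linarith)
  have hta2 : Filter.Tendsto (fun n : ℕ => (a + algebraMap ℝ≥0 A (ε n)) ^ (1+r))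
      Filter.atTop (𝓝 (a ^ (1+r))) := tendsto_perturb ha0 (by linarith)
  have htC : Filter.Tendsto (fun n : ℕ => (a + algebraMap ℝ≥0 A (ε n)) ^ (r/2)
      * (b + algebraMap ℝ≥0 A (ε n)) ^ p * (a + algebraMap ℝ≥0 A (ε n)) ^ (r/2))
      Filter.atTop (𝓝 (a ^ (r/2) * b ^ p * a ^ (r/2))) := (hta.mul htb).mul hta
  have hδ0 : 0 < (1+r)/(p+r) := by positivity
  have hδ1 : (1+r)/(p+r) ≤ 1 := by
    rw [div_le_one (by linarith)]; linarith
  have hCn0 : ∀ n, (0:A) ≤ (a + algebraMap ℝ≥0 A (ε n)) ^ (r/2)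
      * (b + algebraMap ℝ≥0 A (ε n)) ^ p * (a + algebraMap ℝ≥0 A (ε n)) ^ (r/2) := fun n => by
    have h := star_right_conjugate_nonneg (CFC.rpow_nonneg (a := b + algebraMap ℝ≥0 A (ε n)) (y := p))
      ((a + algebraMap ℝ≥0 A (ε n)) ^ (r/2))
    rwa [star_rpow] at h
  have hC0 : (0:A) ≤ a ^ (r/2) * b ^ p * a ^ (r/2) := by
    have h := star_right_conjugate_nonneg (CFC.rpow_nonneg (a := b) (y := p)) (a ^ (r/2))
    rwa [star_rpow] at h
  have htCδ : Filter.Tendsto (fun n : ℕ => ((a + algebraMap ℝ≥0 A (ε n)) ^ (r/2)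
      * (b + algebraMap ℝ≥0 A (ε n)) ^ p * (a + algebraMap ℝ≥0 A (ε n)) ^ (r/2)) ^ ((1+r)/(p+r)))
      Filter.atTop (𝓝 ((a ^ (r/2) * b ^ p * a ^ (r/2)) ^ ((1+r)/(p+r)))) := by
    rw [tendsto_iff_dist_tendsto_zero]
    have hnorm : Filter.Tendsto (fun n : ℕ => ‖((a + algebraMap ℝ≥0 A (ε n)) ^ (r/2)
        * (b + algebraMap ℝ≥0 A (ε n)) ^ p * (a + algebraMap ℝ≥0 A (ε n)) ^ (r/2))
        - a ^ (r/2) * b ^ p * a ^ (r/2)‖) Filter.atTop (𝓝 0) := by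
      have h := (tendsto_iff_dist_tendsto_zero).mp htC
      simpa [dist_eq_norm] using h
    have hbnd : ∀ n : ℕ, dist (((a + algebraMap ℝ≥0 A (ε n)) ^ (r/2)
        * (b + algebraMap ℝ≥0 A (ε n)) ^ p * (a + algebraMap ℝ≥0 A (ε n)) ^ (r/2)) ^ ((1+r)/(p+r)))
        ((a ^ (r/2) * b ^ p * a ^ (r/2)) ^ ((1+r)/(p+r)))
        ≤ 3 * ‖((a + algebraMap ℝ≥0 A (ε n)) ^ (r/2) * (b + algebraMap ℝ≥0 A (ε n)) ^ p
          * (a + algebraMap ℝ≥0 A (ε n)) ^ (r/2)) - a ^ (r/2) * b ^ p * a ^ (r/2)‖ ^ ((1+r)/(p+r)) := by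
      intro n
      rw [dist_eq_norm]
      exact rpow_dist_le (hCn0 n) hC0 hδ0 hδ1
    have hg : Filter.Tendsto (fun n : ℕ => 3 * ‖((a + algebraMap ℝ≥0 A (ε n)) ^ (r/2)
        * (b + algebraMap ℝ≥0 A (ε n)) ^ p * (a + algebraMap ℝ≥0 A (ε n)) ^ (r/2))
        - a ^ (r/2) * b ^ p * a ^ (r/2)‖ ^ ((1+r)/(p+r))) Filter.atTop (𝓝 0) := by
      have h2 := hnorm.rpow_const (Or.inr hδ0.le)
      rw [Real.zero_rpow (ne_of_gt hδ0)] at h2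
      simpa using h2.const_mul 3
    exact squeeze_zero (fun n => dist_nonneg) hbnd hg
  have hF := hta2.sub htCδ
  have hcl := (CStarAlgebra.isClosed_nonneg (A := A)).mem_of_tendsto hF
    (Filter.Eventually.of_forall fun n => by simpa using sub_nonneg.mpr (hstep n))
  exact sub_nonneg.mp hcl
end Furuta

variable {H : Type*} [NormedAddCommGroup H] [InnerProductSpace ℂ H] [CompleteSpace H]

/-- Furuta inequality (A-side): if `0 ≤ B ≤ A`, `p ≥ 1`, `r ≥ 0`, then
`(A^{r/2} B^p A^{r/2})^{(1+r)/(p+r)} ≤ A^{1+r}`. -/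
theorem furuta_A_side (A B : H →L[ℂ] H) (hB : 0 ≤ B) (hA : 0 ≤ A) (hBA : B ≤ A)
    (p r : ℝ) (hp : 1 ≤ p) (hr : 0 ≤ r) :
    (A ^ (r / 2) * B ^ p * A ^ (r / 2)) ^ ((1 + r) / (p + r)) ≤ A ^ (1 + r) := by
  rcases subsingleton_or_nontrivial (H →L[ℂ] H) with hsub | hnt
  · exact le_of_eq (Subsingleton.elim _ _)
  · exact Furuta.furuta_cstar hB hA hBA hp hr
end
end

section
/- If X ≥ Y > 0 are strictly positive operators and s·I ≥ X ≥ t·I for positive reals s ≥ t > 0, then ((s+t)²/(4st)) X² ≥ Y². -/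
/-!
Since `t ≤ X ≤ s`, the commuting product `(s - X)(X - t)` is positive; conjugating it by `X⁻¹`
gives `1 + st X⁻² ≤ (s + t) X⁻¹`. Inversion is operator antitone, so `X⁻¹ ≤ Y⁻¹`, and
`(s + t) Y⁻¹ ≤ ((s + t)/2)² Y⁻² + 1` because `((s + t)/2 Y⁻¹ - 1)² ≥ 0`. Chaining these,
`st X⁻² ≤ ((s + t)/2)² Y⁻²`, and inverting once more gives `Y² ≤ (s + t)²/(4st) X²`.
-/

section CStarAlgebra

variable {A : Type*} [CStarAlgebra A] [PartialOrder A] [StarOrderedRing A]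

lemma smul_one_sub_mul_sub_smul_one_nonneg {a : A} {s t : ℝ} (hta : t • 1 ≤ a)
    (has : a ≤ s • 1) : 0 ≤ (s • 1 - a) * (a - t • 1) := by
  refine Commute.mul_nonneg (sub_nonneg.2 has) (sub_nonneg.2 hta) ?_
  exact (((Commute.one_left a).smul_left s).sub_left (Commute.refl a)).sub_right
    ((Commute.one_right _).smul_right t)

lemma one_add_smul_inv_sq_le_smul_inv {u : Aˣ} {s t : ℝ} (htu : t • 1 ≤ (u : A))
    (hus : (u : A) ≤ s • 1) :
    1 + (s * t) • (↑u⁻¹ : A) ^ 2 ≤ (s + t) • (↑u⁻¹ : A) := by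
  have hu : IsSelfAdjoint (u : A) := ((IsSelfAdjoint.all t).smul (.one A)).of_ge htu
  have hu_inv : star (↑u⁻¹ : A) = ↑u⁻¹ := by
    rw [← Units.coe_star_inv, show star u = u from Units.ext hu.star_eq]
  have h := star_left_conjugate_nonneg (smul_one_sub_mul_sub_smul_one_nonneg htu hus) (↑u⁻¹ : A)
  rw [hu_inv] at h
  rw [← sub_nonneg]
  convert h using 1
  simp only [sub_mul, mul_sub, smul_mul_assoc, mul_smul_comm, one_mul, mul_one, sq,
    Units.mul_inv, Units.inv_mul, Units.inv_mul_cancel_left]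
  module

lemma IsSelfAdjoint.two_mul_smul_le_sq_smul_sq_add_one {c : A} (hc : IsSelfAdjoint c) (r : ℝ) :
    (2 * r) • c ≤ r ^ 2 • c ^ 2 + 1 := by
  have h : 0 ≤ star (r • c - 1) * (r • c - 1) := star_mul_self_nonneg _
  rw [star_sub, star_smul, hc.star_eq, star_one, star_trivial] at h
  rw [← sub_nonneg]
  convert h using 1
  simp only [sub_mul, mul_sub, smul_mul_smul, one_mul, mul_one, sq]
  module

lemma CStarAlgebra.inv_le_smul_inv_iff {a b : Aˣ} (ha : 0 ≤ (a : A)) (hb : 0 ≤ (b : A)) {r : ℝ}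
    (hr : 0 < r) : (↑a⁻¹ : A) ≤ r • ↑b⁻¹ ↔ (b : A) ≤ r • a := by
  set k : ℝˣ := Units.mk0 r hr.ne'
  have h := CStarAlgebra.inv_le_inv_iff (a := a) (b := k⁻¹ • b) ha
    (by simp only [Units.val_smul, Units.smul_def, Units.val_inv_eq_inv_val, Units.val_mk0, k]
        exact smul_nonneg (inv_nonneg.2 hr.le) hb)
  simp only [Units.smul_inv, inv_inv, Units.val_smul, Units.smul_def, Units.val_mk0,
    Units.val_inv_eq_inv_val, k] at h
  rw [h, inv_smul_le_iff_of_pos hr]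

theorem CStarAlgebra.sq_le_smul_sq_of_le {a b : A} {s t : ℝ} (hb : IsStrictlyPositive b)
    (hba : b ≤ a) (ht : 0 < t) (hts : t ≤ s) (hta : t • 1 ≤ a) (has : a ≤ s • 1) :
    b ^ 2 ≤ ((s + t) ^ 2 / (4 * s * t)) • a ^ 2 := by
  have hs : 0 < s := ht.trans_le hts
  have hb0 : 0 ≤ b := hb.nonneg
  have ha0 : 0 ≤ a := hb0.trans hba
  lift a to Aˣ using CStarAlgebra.isUnit_of_le b hba hb
  lift b to Aˣ using hb.isUnit
  have hb_inv : IsSelfAdjoint (↑b⁻¹ : A) := .of_nonneg (CFC.inv_nonneg_of_nonneg b hb0)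
  have hsquare := hb_inv.two_mul_smul_le_sq_smul_sq_add_one ((s + t) / 2)
  rw [show 2 * ((s + t) / 2) = s + t by ring] at hsquare
  have h_inv_sq : (s * t) • (↑a⁻¹ : A) ^ 2 ≤ ((s + t) / 2) ^ 2 • (↑b⁻¹ : A) ^ 2 :=
    calc (s * t) • (↑a⁻¹ : A) ^ 2 ≤ (s + t) • (↑a⁻¹ : A) - 1 :=
          le_sub_iff_add_le'.2 (one_add_smul_inv_sq_le_smul_inv hta has)
      _ ≤ (s + t) • (↑b⁻¹ : A) - 1 := by gcongr; exact CStarAlgebra.inv_le_inv hb0 hba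
      _ ≤ ((s + t) / 2) ^ 2 • (↑b⁻¹ : A) ^ 2 := sub_le_iff_le_add.2 hsquare
  have hK : (s + t) ^ 2 / (4 * s * t) = (s * t)⁻¹ * ((s + t) / 2) ^ 2 := by
    field_simp; ring
  rw [← Units.val_pow_eq_pow_val, ← Units.val_pow_eq_pow_val,
    ← CStarAlgebra.inv_le_smul_inv_iff (IsSelfAdjoint.of_nonneg ha0).sq_nonneg
      (IsSelfAdjoint.of_nonneg hb0).sq_nonneg (by positivity),
    ← inv_pow, ← inv_pow, Units.val_pow_eq_pow_val, Units.val_pow_eq_pow_val, hK, ← smul_smul,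
    le_inv_smul_iff_of_pos (by positivity)]
  exact h_inv_sq

end CStarAlgebra

variable {H : Type*} [NormedAddCommGroup H] [InnerProductSpace ℂ H] [CompleteSpace H]

/-- Kantorovich-type squaring inequality with bounds on the larger operator. -/
theorem kantorovich_square_upper (X Y : H →L[ℂ] H) (hY : 0 ≤ Y) (hYinv : IsUnit Y)
    (hYX : Y ≤ X) (s t : ℝ) (ht : 0 < t) (hts : t ≤ s)
    (hXs : X ≤ s • (1 : H →L[ℂ] H)) (hXt : t • (1 : H →L[ℂ] H) ≤ X) :
    Y ^ (2 : ℕ) ≤ ((s + t) ^ 2 / (4 * s * t)) • X ^ (2 : ℕ) :=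
  CStarAlgebra.sq_le_smul_sq_of_le (hYinv.isStrictlyPositive hY) hYX ht hts hXt hXs
end

section
/- If X ≥ Y > 0 are strictly positive operators and s·I ≥ Y ≥ t·I for positive reals s ≥ t > 0, then ((s+t)²/(4st)) X² ≥ Y². -/
/-!
Since `s - Y` and `Y - t` are commuting nonnegative operators, their product is nonnegative, i.e.
`Y² ≤ (s + t) Y - s t`. The right side is monotone in `Y`, so it is at most `(s + t) X - s t`,
and expanding `0 ≤ ((s + t) X - 2 s t)²` shows that this is at most `((s + t)² / 4st) X²`.
-/

section

variable {A : Type*} [Ring A] [PartialOrder A] [StarRing A] [StarOrderedRing A] [TopologicalSpace A]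
  [Algebra ℝ A] [ContinuousFunctionalCalculus ℝ A IsSelfAdjoint] [NonnegSpectrumClass ℝ A]

theorem sq_le_smul_sub_of_smul_one_le_of_le_smul_one {a : A} {s t : ℝ}
    (hta : t • (1 : A) ≤ a) (has : a ≤ s • (1 : A)) :
    a ^ 2 ≤ (s + t) • a - (s * t) • (1 : A) := by
  have hcomm : Commute (s • (1 : A) - a) (a - t • 1) :=
    (((Commute.one_left a).smul_left s).sub_left (Commute.refl a)).sub_right
      ((Commute.one_right _).smul_right t)
  have h := hcomm.mul_nonneg (sub_nonneg.mpr has) (sub_nonneg.mpr hta)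
  rw [← sub_nonneg]
  convert h using 1
  simp only [sq, sub_mul, mul_sub, smul_mul_assoc, mul_smul_comm, one_mul, mul_one]
  module

end

section

variable {A : Type*} [Ring A] [StarRing A] [PartialOrder A] [StarOrderedRing A] [Algebra ℝ A]
  [StarModule ℝ A]

theorem IsSelfAdjoint.smul_sub_smul_one_le {x : A} (hx : IsSelfAdjoint x) (p : ℝ) {q : ℝ}
    (hq : 0 < q) : p • x - q • (1 : A) ≤ (p ^ 2 / (4 * q)) • x ^ 2 := by
  have hsa : IsSelfAdjoint (p • x - (2 * q) • (1 : A)) :=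
    ((IsSelfAdjoint.all p).smul hx).sub ((IsSelfAdjoint.all _).smul (.one A))
  rw [← sub_nonneg]
  convert smul_nonneg (inv_nonneg.mpr (by positivity : (0 : ℝ) ≤ 4 * q)) hsa.sq_nonneg using 1
  simp only [sq, sub_mul, mul_sub, smul_mul_assoc, mul_smul_comm, one_mul, mul_one, smul_sub,
    smul_smul]
  match_scalars <;> field_simp <;> ring

end

variable {H : Type*} [NormedAddCommGroup H] [InnerProductSpace ℂ H] [CompleteSpace H]

theorem kantorovich_square_lower_general (X Y : H →L[ℂ] H)
    (hYX : Y ≤ X) (s t : ℝ) (ht : 0 < t) (hts : t ≤ s)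
    (hYs : Y ≤ s • (1 : H →L[ℂ] H)) (hYt : t • (1 : H →L[ℂ] H) ≤ Y) :
    Y ^ (2 : ℕ) ≤ ((s + t) ^ 2 / (4 * s * t)) • X ^ (2 : ℕ) := by
  have hX : 0 ≤ X := (smul_nonneg ht.le zero_le_one).trans (hYt.trans hYX)
  have hst : 0 < s * t := mul_pos (ht.trans_le hts) ht
  calc Y ^ 2 ≤ (s + t) • Y - (s * t) • 1 := sq_le_smul_sub_of_smul_one_le_of_le_smul_one hYt hYs
    _ ≤ (s + t) • X - (s * t) • 1 := by gcongr; linarith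
    _ ≤ ((s + t) ^ 2 / (4 * (s * t))) • X ^ 2 := hX.isSelfAdjoint.smul_sub_smul_one_le _ hst
    _ = ((s + t) ^ 2 / (4 * s * t)) • X ^ 2 := by rw [mul_assoc]

/-- Kantorovich-type squaring inequality with bounds on the smaller operator. -/
theorem kantorovich_square_lower (X Y : H →L[ℂ] H) (hY : 0 ≤ Y) (hYinv : IsUnit Y)
    (hYX : Y ≤ X) (s t : ℝ) (ht : 0 < t) (hts : t ≤ s)
    (hYs : Y ≤ s • (1 : H →L[ℂ] H)) (hYt : t • (1 : H →L[ℂ] H) ≤ Y) :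
    Y ^ (2 : ℕ) ≤ ((s + t) ^ 2 / (4 * s * t)) • X ^ (2 : ℕ) :=
  kantorovich_square_lower_general X Y hYX s t ht hts hYs hYt
end

section
/- (Converse direction of Theorem 2.1, n = 1, lower inequality) Let A₁, A₂, A₃ be strictly positive operators. Suppose that for all p₂ ≥ 1 the inequality A₃ ≥ { A₃ (A₂^{-1/2} A₁ A₂^{-1/2})^{p₂} A₃ }^{1/2} holds (the case p₁ = 1, t = 1, r = 2). Then A₂ ≥ A₁. -/
/-! The hypothesis bounds `‖B ^ p‖ = ‖B‖ ^ p` uniformly in `p ≥ 1` for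
`B = A₂ ^ (-1/2) * A₁ * A₂ ^ (-1/2)`: the square root of `A₃ * B ^ p * A₃` has norm at most `‖A₃‖`,
and conjugating back by the invertible `A₃` costs only a constant. Letting `p → ∞` forces
`‖B‖ ≤ 1`, i.e. `B ≤ 1`, and conjugating by `A₂ ^ (1/2)` gives `A₁ ≤ A₂`. -/

open CFC

lemma Real.le_one_of_forall_rpow_le {x K : ℝ} (h : ∀ p : ℝ, 1 ≤ p → x ^ p ≤ K) :
    x ≤ 1 := by
  by_contra! hx1
  obtain ⟨n, hn⟩ := pow_unbounded_of_one_lt K hx1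
  have hK : x ^ (n + 1) ≤ K := by
    simpa [← Real.rpow_natCast] using h (n + 1) (by simp)
  have hmono : x ^ n ≤ x ^ (n + 1) := pow_le_pow_right₀ hx1.le n.le_succ
  linarith

lemma Units.norm_le_norm_inv_sq_mul_norm_mul_mul {R : Type*} [NormedRing R] (u : Rˣ) (x : R) :
    ‖x‖ ≤ ‖(↑u⁻¹ : R)‖ ^ 2 * ‖(u : R) * x * u‖ := by
  have hx : x = ↑u⁻¹ * ((u : R) * x * u) * ↑u⁻¹ := by
    simp [← mul_assoc]
  calc ‖x‖ = ‖↑u⁻¹ * ((u : R) * x * u) * ↑u⁻¹‖ := by rw [← hx]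
    _ ≤ ‖(↑u⁻¹ : R)‖ * ‖(u : R) * x * u‖ * ‖(↑u⁻¹ : R)‖ := norm_mul₃_le
    _ = ‖(↑u⁻¹ : R)‖ ^ 2 * ‖(u : R) * x * u‖ := by ring

section CStarAlgebra

variable {A : Type*} [CStarAlgebra A] [PartialOrder A] [StarOrderedRing A]

lemma CStarAlgebra.norm_le_sq_of_rpow_half_le {a b : A} (ha : 0 ≤ a)
    (hab : a ^ (1 / 2 : ℝ) ≤ b) : ‖a‖ ≤ ‖b‖ ^ 2 := by
  have h : ‖a ^ (1 / 2 : ℝ)‖ ≤ ‖b‖ := norm_le_norm_of_nonneg_of_le rpow_nonneg hab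
  rw [norm_rpow a (by norm_num) ha] at h
  calc ‖a‖ = (‖a‖ ^ (1 / 2 : ℝ)) ^ 2 := by
        rw [← Real.rpow_natCast, ← Real.rpow_mul (norm_nonneg a)]; norm_num
    _ ≤ ‖b‖ ^ 2 := by gcongr

lemma CStarAlgebra.norm_le_of_rpow_half_conj_le {x : A} (hx : 0 ≤ x) (u : Aˣ) (hu : 0 ≤ (u : A))
    (h : ((u : A) * x * u) ^ (1 / 2 : ℝ) ≤ u) : ‖x‖ ≤ ‖(↑u⁻¹ : A)‖ ^ 2 * ‖(u : A)‖ ^ 2 :=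
  (u.norm_le_norm_inv_sq_mul_norm_mul_mul x).trans <| by
    gcongr
    exact norm_le_sq_of_rpow_half_le (conjugate_nonneg_of_nonneg hx hu) h

lemma CFC.le_of_rpow_neg_half_conj_le_one {a c : A} (ha : IsStrictlyPositive a)
    (h : a ^ (-(1 / 2) : ℝ) * c * a ^ (-(1 / 2) : ℝ) ≤ 1) : c ≤ a := by
  have hright : a ^ (1 / 2 : ℝ) * a ^ (-(1 / 2) : ℝ) = 1 := rpow_mul_rpow_neg _ ha
  have hleft : a ^ (-(1 / 2) : ℝ) * a ^ (1 / 2 : ℝ) = 1 := rpow_neg_mul_rpow _ ha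
  calc c = a ^ (1 / 2 : ℝ) * (a ^ (-(1 / 2) : ℝ) * c * a ^ (-(1 / 2) : ℝ)) * a ^ (1 / 2 : ℝ) := by
        simp only [← mul_assoc, hright, one_mul]
        rw [mul_assoc, hleft, mul_one]
    _ ≤ a ^ (1 / 2 : ℝ) * 1 * a ^ (1 / 2 : ℝ) := conjugate_le_conjugate_of_nonneg h rpow_nonneg
    _ = a := by
        rw [mul_one, ← rpow_add ha.isUnit]
        norm_num
        exact rpow_one a

end CStarAlgebra

variable {H : Type*} [NormedAddCommGroup H] [InnerProductSpace ℂ H] [CompleteSpace H]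

theorem thm21_converse_n1_general (A₁ A₂ A₃ : H →L[ℂ] H)
    (hA₁ : 0 ≤ A₁) (hA₂ : 0 ≤ A₂) (hA₂inv : IsUnit A₂)
    (hA₃ : 0 ≤ A₃) (hA₃inv : IsUnit A₃)
    (h : ∀ p₂ : ℝ, 1 ≤ p₂ →
      (A₃ * (A₂ ^ (-(1 / 2) : ℝ) * A₁ * A₂ ^ (-(1 / 2) : ℝ)) ^ p₂ * A₃) ^ ((1 : ℝ) / 2) ≤ A₃) :
    A₁ ≤ A₂ := by
  obtain ⟨u, rfl⟩ := hA₃inv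
  set B := A₂ ^ (-(1 / 2) : ℝ) * A₁ * A₂ ^ (-(1 / 2) : ℝ)
  have hB : 0 ≤ B := conjugate_nonneg_of_nonneg hA₁ rpow_nonneg
  have hB_norm : ‖B‖ ≤ 1 := by
    refine Real.le_one_of_forall_rpow_le (K := ‖(↑u⁻¹ : H →L[ℂ] H)‖ ^ 2 * ‖(u : H →L[ℂ] H)‖ ^ 2)
      fun p hp => ?_
    rw [← norm_rpow B (by linarith) hB]
    exact CStarAlgebra.norm_le_of_rpow_half_conj_le rpow_nonneg u hA₃ (h p hp)
  exact le_of_rpow_neg_half_conj_le_one (IsStrictlyPositive.iff_of_unital.mpr ⟨hA₂, hA₂inv⟩)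
    ((CStarAlgebra.norm_le_one_iff_of_nonneg B hB).mp hB_norm)

/-- Converse direction of Theorem 2.1 for n = 1 (lower inequality). -/
theorem thm21_converse_n1 (A₁ A₂ A₃ : H →L[ℂ] H)
    (hA₁ : 0 ≤ A₁) (hA₁inv : IsUnit A₁) (hA₂ : 0 ≤ A₂) (hA₂inv : IsUnit A₂)
    (hA₃ : 0 ≤ A₃) (hA₃inv : IsUnit A₃)
    (h : ∀ p₂ : ℝ, 1 ≤ p₂ →
      (A₃ * (A₂ ^ (-(1 / 2) : ℝ) * A₁ * A₂ ^ (-(1 / 2) : ℝ)) ^ p₂ * A₃) ^ ((1 : ℝ) / 2) ≤ A₃) :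
    A₁ ≤ A₂ :=
  thm21_converse_n1_general A₁ A₂ A₃ hA₁ hA₂ hA₂inv hA₃ hA₃inv h
end

section
/- (Douglas majorization–factorization) For bounded operators S, T on a Hilbert space and λ > 0, one has S S* ≤ λ² T T* if and only if there exists a bounded operator Q with T Q = S; moreover Q can be chosen with ‖Q‖ ≤ λ. -/
/-!
If `‖S* x‖ ≤ λ ‖T* x‖` for all `x` (which is what `S S* ≤ λ² T T*` says), then `T* x ↦ S* x` is a
well-defined linear map on the range of `T*`, bounded by `λ`. It extends by continuity to the
closure of that range and by zero on its orthogonal complement, giving `R` with `R T* = S*` and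
`‖R‖ ≤ λ`; then `Q = R*` satisfies `T Q = S`. Conversely `T Q = S` gives `S* = Q* T*`.
-/

noncomputable section

variable {H : Type*} [NormedAddCommGroup H] [InnerProductSpace ℂ H] [CompleteSpace H]

namespace ContinuousLinearMap

section Factorization

variable {𝕜 E F G : Type*} [RCLike 𝕜]
  [NormedAddCommGroup E] [NormedSpace 𝕜 E]
  [NormedAddCommGroup F] [InnerProductSpace 𝕜 F] [CompleteSpace F]
  [NormedAddCommGroup G] [NormedSpace 𝕜 G] [CompleteSpace G]

theorem exists_opNorm_le_comp_eq_of_norm_le (A : E →L[𝕜] G) (B : E →L[𝕜] F) {l : ℝ}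
    (hl : 0 ≤ l) (h : ∀ x, ‖A x‖ ≤ l * ‖B x‖) :
    ∃ R : F →L[𝕜] G, ‖R‖ ≤ l ∧ R ∘L B = A := by
  set K := B.range.topologicalClosure
  let B' : E →ₗ[𝕜] K :=
    (B : E →ₗ[𝕜] F).codRestrict K fun x => Submodule.le_topologicalClosure _ ⟨x, rfl⟩
  have hB' : DenseRange B' := by
    rw [DenseRange, Subtype.dense_iff, ← Set.range_comp]
    exact subset_rfl
  let R₀ : K →L[𝕜] G := (A : E →ₗ[𝕜] G).extendOfNorm B'
  refine ⟨R₀ ∘L K.orthogonalProjectionOnto, ?_, ?_⟩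
  · calc ‖R₀ ∘L K.orthogonalProjectionOnto‖ ≤ l * 1 :=
          (opNorm_comp_le _ _).trans <| mul_le_mul (LinearMap.opNorm_extendOfNorm_le hB' hl h)
            K.orthogonalProjectionOnto_norm_le (norm_nonneg _) hl
      _ = l := mul_one l
  · ext x
    have hP : K.orthogonalProjectionOnto (B x) = B' x :=
      K.orthogonalProjectionOnto_mem_subspace_eq_self (B' x)
    simp only [comp_apply, hP]
    exact LinearMap.extendOfNorm_eq hB' ⟨l, h⟩ x

theorem exists_opNorm_le_comp_eq_iff (A : E →L[𝕜] G) (B : E →L[𝕜] F) {l : ℝ} (hl : 0 ≤ l) :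
    (∃ R : F →L[𝕜] G, ‖R‖ ≤ l ∧ R ∘L B = A) ↔ ∀ x, ‖A x‖ ≤ l * ‖B x‖ := by
  refine ⟨?_, exists_opNorm_le_comp_eq_of_norm_le A B hl⟩
  rintro ⟨R, hR, rfl⟩ x
  exact (R.le_opNorm (B x)).trans (mul_le_mul_of_nonneg_right hR (norm_nonneg _))

end Factorization

section Loewner

variable {E F : Type*}
  [NormedAddCommGroup E] [InnerProductSpace ℂ E] [CompleteSpace E]
  [NormedAddCommGroup F] [InnerProductSpace ℂ F] [CompleteSpace F]

theorem re_inner_comp_adjoint_apply_self (A : E →L[ℂ] F) (y : F) :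
    RCLike.re (inner ℂ ((A ∘L adjoint A) y) y) = ‖adjoint A y‖ ^ 2 := by
  rw [apply_norm_sq_eq_inner_adjoint_left, adjoint_adjoint]

theorem comp_adjoint_le_smul_comp_adjoint_iff (A B : E →L[ℂ] F) (c : ℝ) :
    A ∘L adjoint A ≤ c • (B ∘L adjoint B) ↔ ∀ y, ‖adjoint A y‖ ^ 2 ≤ c * ‖adjoint B y‖ ^ 2 := by
  have hsa : IsSelfAdjoint (c • (B ∘L adjoint B) - A ∘L adjoint A) :=
    ((IsSelfAdjoint.all c).smul (isPositive_self_comp_adjoint B).isSelfAdjoint).sub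
      (isPositive_self_comp_adjoint A).isSelfAdjoint
  rw [le_def, isPositive_def', and_iff_right hsa]
  refine forall_congr' fun y => ?_
  rw [reApplyInnerSelf_apply, sub_apply, inner_sub_left, map_sub, sub_nonneg, smul_apply,
    RCLike.real_smul_eq_coe_smul (K := ℂ), inner_smul_left, RCLike.conj_ofReal,
    RCLike.re_ofReal_mul, re_inner_comp_adjoint_apply_self, re_inner_comp_adjoint_apply_self]

theorem comp_adjoint_le_sq_smul_comp_adjoint_iff (A B : E →L[ℂ] F) {l : ℝ} (hl : 0 ≤ l) :
    A ∘L adjoint A ≤ l ^ 2 • (B ∘L adjoint B) ↔ ∀ y, ‖adjoint A y‖ ≤ l * ‖adjoint B y‖ := by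
  simp only [comp_adjoint_le_smul_comp_adjoint_iff, ← mul_pow]
  exact forall_congr' fun y => sq_le_sq₀ (norm_nonneg _) (by positivity)

end Loewner

end ContinuousLinearMap

open ContinuousLinearMap in
/-- Douglas's majorization and factorization theorem. -/
theorem douglas (S T : H →L[ℂ] H) (l : ℝ) (hl : 0 < l) :
    S * adjoint S ≤ (l ^ 2) • (T * adjoint T) ↔
      ∃ Q : H →L[ℂ] H, ‖Q‖ ≤ l ∧ T * Q = S := by
  rw [mul_def, mul_def, comp_adjoint_le_sq_smul_comp_adjoint_iff S T hl.le,
    ← exists_opNorm_le_comp_eq_iff _ _ hl.le]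
  constructor
  · rintro ⟨R, hR, hRT⟩
    refine ⟨adjoint R, (adjoint.norm_map R).trans_le hR, ?_⟩
    rw [← adjoint_adjoint S, ← hRT, adjoint_comp, adjoint_adjoint, mul_def]
  · rintro ⟨Q, hQ, rfl⟩
    exact ⟨adjoint Q, (adjoint.norm_map Q).trans_le hQ, by rw [mul_def, adjoint_comp]⟩
end
end
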